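/- The entropy of the softmax output σ(s·z) is monotone nonincreasing in the scale s on (0, ∞): for 0 < s₁ ≤ s₂, H(σ(s₁·z)) ≥ H(σ(s₂·z)), where H(p) = −∑_c p_c log p_c. -/

import Mathlib

/-!
Write `Z s = ∑ i, exp (s * z i)` and `p = σ (s • z)`. Since `log p i = s * z i - log (Z s)`,
the entropy is `log (Z s) - s * 𝔼_p[z]`, and differentiating (with `Z' = Z * 𝔼_p[z]`) gives
`d/ds H = -s * Var_p(z)`. The variance is nonnegative by Cauchy–Schwarz, so `H` is
antitone on `[0, ∞)`.
-/

open Finset Real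

variable {ι : Type*} [Fintype ι]

/-- Divided by `expMoment z 0 s`, this is the `k`-th moment of `z` under `σ (s • z)`. -/
noncomputable def expMoment (z : ι → ℝ) (k : ℕ) (s : ℝ) : ℝ :=
  ∑ i, exp (s * z i) * z i ^ k

noncomputable def softmaxEntropy (z : ι → ℝ) (s : ℝ) : ℝ :=
  -∑ i, (exp (s * z i) / ∑ j, exp (s * z j)) * log (exp (s * z i) / ∑ j, exp (s * z j))

lemma expMoment_zero (z : ι → ℝ) (s : ℝ) : expMoment z 0 s = ∑ i, exp (s * z i) := by
  simp [expMoment]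

lemma expMoment_zero_pos [Nonempty ι] (z : ι → ℝ) (s : ℝ) : 0 < expMoment z 0 s := by
  rw [expMoment_zero]
  exact sum_pos (fun i _ ↦ exp_pos _) univ_nonempty

lemma hasDerivAt_expMoment (z : ι → ℝ) (k : ℕ) (s : ℝ) :
    HasDerivAt (expMoment z k) (expMoment z (k + 1) s) s := by
  have h := HasDerivAt.fun_sum (u := univ)
    fun i _ ↦ ((hasDerivAt_mul_const (x := s) (z i)).exp).mul_const (z i ^ k)
  refine h.congr_deriv (sum_congr rfl fun i _ ↦ ?_)
  ring

lemma expMoment_one_sq_le (z : ι → ℝ) (s : ℝ) :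
    expMoment z 1 s ^ 2 ≤ expMoment z 0 s * expMoment z 2 s :=
  sum_sq_le_sum_mul_sum_of_sq_le_mul univ (fun _ _ ↦ by positivity)
    (fun _ _ ↦ by positivity) fun _ _ ↦ (by ring : _ = _).le

lemma expMoment_variance_nonneg [Nonempty ι] (z : ι → ℝ) (s : ℝ) :
    0 ≤ expMoment z 2 s / expMoment z 0 s - (expMoment z 1 s / expMoment z 0 s) ^ 2 := by
  have hZ := (expMoment_zero_pos z s).ne'
  rw [show expMoment z 2 s / expMoment z 0 s - (expMoment z 1 s / expMoment z 0 s) ^ 2 =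
    (expMoment z 0 s * expMoment z 2 s - expMoment z 1 s ^ 2) / expMoment z 0 s ^ 2 by
      field_simp]
  exact div_nonneg (sub_nonneg.2 (expMoment_one_sq_le z s)) (sq_nonneg _)

lemma softmaxEntropy_eq [Nonempty ι] (z : ι → ℝ) (s : ℝ) :
    softmaxEntropy z s = log (expMoment z 0 s) - s * (expMoment z 1 s / expMoment z 0 s) := by
  have hZ := (expMoment_zero_pos z s).ne'
  have hlog : ∀ i, log (exp (s * z i) / expMoment z 0 s) = s * z i - log (expMoment z 0 s) :=
    fun i ↦ by rw [log_div (exp_ne_zero _) hZ, log_exp]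
  rw [softmaxEntropy, ← expMoment_zero]
  simp only [hlog, mul_sub, sum_sub_distrib, ← sum_mul, ← sum_div, ← expMoment_zero,
    div_self hZ]
  have hmean : ∑ i, exp (s * z i) / expMoment z 0 s * (s * z i) =
      s * (expMoment z 1 s / expMoment z 0 s) := by
    simp only [expMoment, pow_one, mul_sum, sum_div]
    exact sum_congr rfl fun i _ ↦ by ring
  rw [hmean]
  ring

lemma hasDerivAt_softmaxEntropy [Nonempty ι] (z : ι → ℝ) (s : ℝ) :
    HasDerivAt (softmaxEntropy z)
      (-s * (expMoment z 2 s / expMoment z 0 s - (expMoment z 1 s / expMoment z 0 s) ^ 2)) s := by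
  have hZ := (expMoment_zero_pos z s).ne'
  have h := ((hasDerivAt_expMoment z 0 s).log hZ).fun_sub
    ((hasDerivAt_id' s).fun_mul
      ((hasDerivAt_expMoment z 1 s).fun_div (hasDerivAt_expMoment z 0 s) hZ))
  rw [show softmaxEntropy z = _ from funext (softmaxEntropy_eq z)]
  refine h.congr_deriv ?_
  field_simp
  ring

lemma softmaxEntropy_antitoneOn [Nonempty ι] (z : ι → ℝ) :
    AntitoneOn (softmaxEntropy z) (Set.Ici 0) := by
  refine antitoneOn_of_hasDerivWithinAt_nonpos (convex_Ici 0)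
    (fun s _ ↦ (hasDerivAt_softmaxEntropy z s).continuousAt.continuousWithinAt)
    (fun s _ ↦ (hasDerivAt_softmaxEntropy z s).hasDerivWithinAt) fun s hs ↦ ?_
  rw [interior_Ici] at hs
  exact mul_nonpos_of_nonpos_of_nonneg (neg_nonpos.2 (le_of_lt hs))
    (expMoment_variance_nonneg z s)

/-- the Shannon entropy of the softmax output `σ (s • z)` is monotone
nonincreasing in the scale `s` on `(0, ∞)`: for `0 < s₁ ≤ s₂`,
`H (σ (s₁ • z)) ≥ H (σ (s₂ • z))`. -/
theorem softmax_entropy_antitone_in_scale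
    {C : ℕ} (hC : 0 < C) (z : Fin C → ℝ) (s₁ s₂ : ℝ) (h1 : 0 < s₁) (h2 : s₁ ≤ s₂) :
    -(∑ c, (Real.exp (s₂ * z c) / ∑ k, Real.exp (s₂ * z k)) *
        Real.log (Real.exp (s₂ * z c) / ∑ k, Real.exp (s₂ * z k))) ≤
      -(∑ c, (Real.exp (s₁ * z c) / ∑ k, Real.exp (s₁ * z k)) *
        Real.log (Real.exp (s₁ * z c) / ∑ k, Real.exp (s₁ * z k))) :=
  have : Nonempty (Fin C) := ⟨⟨0, hC⟩⟩
  softmaxEntropy_antitoneOn z (Set.mem_Ici.2 h1.le) (Set.mem_Ici.2 (h1.le.trans h2)) h2
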